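/- arXiv:1309.3798 — 3 statements merged into one kernel-verified Lean document; each statement's English description precedes it below -/
import Mathlib

section
/- Let Y_n = ∑_{i=1}^n X_i be a martingale (with X_i the martingale differences) such that ∑_{n=1}^∞ E[X_n²]/n² < ∞. Then Y_n / n → 0 almost surely. -/
open MeasureTheory Filter Finset
open scoped ENNReal

lemma kronecker_aux {x : ℕ → ℝ} {c : ℝ}
    (h : Tendsto (fun n => ∑ k ∈ range n, x k / ((k : ℝ) + 1)) atTop (nhds c)) :
    Tendsto (fun n : ℕ => (∑ k ∈ range n, x k) / n) atTop (nhds 0) := by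
  set b : ℕ → ℝ := fun n => ∑ k ∈ range n, x k / ((k : ℝ) + 1) with hb
  have key : ∀ n : ℕ, ∑ k ∈ range n, x k = n * b n - ∑ k ∈ range n, b k := by
    intro n
    induction n with
    | zero => simp [hb]
    | succ n ih =>
      rw [sum_range_succ, ih, sum_range_succ]
      have hbn : b (n + 1) = b n + x n / ((n : ℝ) + 1) := by
        simp [hb, sum_range_succ]
      rw [hbn]
      push_cast
      field_simp
      ring
  have h2 : Tendsto (fun n : ℕ => b n - (n : ℝ)⁻¹ * ∑ k ∈ range n, b k) atTop (nhds 0) := by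
    have := h.sub h.cesaro
    simpa using this
  refine h2.congr' ?_
  filter_upwards [eventually_ne_atTop 0] with n hn
  have hn' : (n : ℝ) ≠ 0 := Nat.cast_ne_zero.2 hn
  rw [key n]
  field_simp

/-- Strong law of large numbers for martingales. -/
theorem stmt_3
    {Ω : Type*} {m0 : MeasurableSpace Ω} (μ : Measure Ω) [IsProbabilityMeasure μ]
    (ℱ : Filtration ℕ m0) (Y : ℕ → Ω → ℝ)
    (hY : Martingale Y ℱ μ) (hY0 : ∀ ω, Y 0 ω = 0)
    (hL2 : ∀ n : ℕ, MemLp (fun ω => Y (n + 1) ω - Y n ω) 2 μ)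
    (hsum : Summable fun n : ℕ =>
      (∫ ω, (Y (n + 1) ω - Y n ω) ^ 2 ∂μ) / ((n : ℝ) + 1) ^ 2) :
    ∀ᵐ ω ∂μ, Tendsto (fun n : ℕ => Y n ω / n) atTop (nhds 0) := by
  set X : ℕ → Ω → ℝ := fun n ω => Y (n + 1) ω - Y n ω with hX
  set D : ℕ → Ω → ℝ := fun n ω => (((n : ℝ) + 1))⁻¹ * X n ω with hD
  set Z : ℕ → Ω → ℝ := fun n ω => ∑ k ∈ range n, D k ω with hZ
  have hXm : ∀ n, MemLp (X n) 2 μ := hL2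
  have hDm : ∀ n, MemLp (D n) 2 μ := fun n => (hXm n).const_mul _
  have hDint : ∀ n, Integrable (D n) μ := fun n => (hDm n).integrable one_le_two
  have hXadp : ∀ n, StronglyMeasurable[ℱ (n + 1)] (X n) := fun n =>
    (hY.stronglyAdapted (n + 1)).sub ((hY.stronglyAdapted n).mono (ℱ.mono n.le_succ))
  have hDadp : ∀ n, StronglyMeasurable[ℱ (n + 1)] (D n) := fun n =>
    (hXadp n).const_mul _
  -- conditional expectation of increments is zero
  have hcondX : ∀ n, μ[X n | ℱ n] =ᵐ[μ] 0 := by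
    intro n
    have h1 : μ[Y (n + 1) | ℱ n] =ᵐ[μ] Y n := hY.condExp_ae_eq n.le_succ
    have h2 : μ[Y n | ℱ n] =ᵐ[μ] Y n := hY.condExp_ae_eq le_rfl
    have h3 : μ[X n | ℱ n] =ᵐ[μ] μ[Y (n + 1) | ℱ n] - μ[Y n | ℱ n] :=
      condExp_sub (hY.integrable _) (hY.integrable _) _
    filter_upwards [h1, h2, h3] with ω e1 e2 e3
    simp [e3, e1, e2]
  have hcondD : ∀ n, μ[D n | ℱ n] =ᵐ[μ] 0 := by
    intro n
    have h3 : μ[D n | ℱ n] =ᵐ[μ] (((n : ℝ) + 1))⁻¹ • μ[X n | ℱ n] := by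
      exact condExp_smul (((n : ℝ) + 1))⁻¹ (X n) (ℱ n) (μ := μ)
    filter_upwards [h3, hcondX n] with ω e3 e1
    simp [e3, e1]
  -- Z basics
  have hZm : ∀ n, MemLp (Z n) 2 μ := by
    intro n
    have := memLp_finsetSum (range n) (fun k _ => hDm k)
    simpa [hZ] using this
  have hZint : ∀ n, Integrable (Z n) μ := fun n => (hZm n).integrable one_le_two
  have hZadp : StronglyAdapted ℱ Z := by
    intro n
    have : StronglyMeasurable[ℱ n] fun ω => ∑ k ∈ range n, D k ω := by
      apply Finset.stronglyMeasurable_fun_sum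
      intro k hk
      exact (hDadp k).mono (ℱ.mono (mem_range.mp hk))
    simpa [hZ] using this
  have hZsucc : ∀ n, Z (n + 1) = Z n + D n := by
    intro n; funext ω; simp [hZ, sum_range_succ]
  -- Z is a martingale
  have hZmart : Martingale Z ℱ μ := by
    refine martingale_nat hZadp hZint fun n => ?_
    have h1 : μ[Z (n + 1) | ℱ n] =ᵐ[μ] μ[Z n | ℱ n] + μ[D n | ℱ n] := by
      rw [hZsucc n]; exact condExp_add (hZint n) (hDint n) _
    have h2 : μ[Z n | ℱ n] =ᵐ[μ] Z n :=
      Filter.EventuallyEq.of_eq (condExp_of_stronglyMeasurable (ℱ.le n) (hZadp n) (hZint n))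
    filter_upwards [h1, h2, hcondD n] with ω e1 e2 e3
    simp [e1, e2, e3]
  -- integrability of products
  have hmul : ∀ (f g : Ω → ℝ), MemLp f 2 μ → MemLp g 2 μ →
      Integrable (fun ω => f ω * g ω) μ := by
    intro f g hf hg
    have : MemLp (g • f) 1 μ := hf.smul hg
    exact this.integrable le_rfl |>.congr (by filter_upwards with ω; simp [mul_comm])
  -- cross term vanishes
  have hcross : ∀ n, ∫ ω, Z n ω * D n ω ∂μ = 0 := by
    intro n
    have hint : Integrable (fun ω => Z n ω * D n ω) μ := hmul _ _ (hZm n) (hDm n)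
    have hpull : μ[fun ω => Z n ω * D n ω | ℱ n] =ᵐ[μ] fun ω => Z n ω * (μ[D n | ℱ n]) ω := by
      exact condExp_mul_of_stronglyMeasurable_left (hZadp n) hint (hDint n)
    have : ∫ ω, Z n ω * D n ω ∂μ = ∫ ω, (μ[fun ω => Z n ω * D n ω | ℱ n]) ω ∂μ :=
      (integral_condExp (ℱ.le n)).symm
    rw [this]
    have hzero : μ[fun ω => Z n ω * D n ω | ℱ n] =ᵐ[μ] 0 := by
      filter_upwards [hpull, hcondD n] with ω e1 e2
      simp [e1, e2]
    rw [integral_congr_ae hzero]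
    simp
  -- variance identity
  have hvar : ∀ n, ∫ ω, (Z n ω) ^ 2 ∂μ
      = ∑ k ∈ range n, (∫ ω, (X k ω) ^ 2 ∂μ) / ((k : ℝ) + 1) ^ 2 := by
    intro n
    induction n with
    | zero => simp [hZ]
    | succ n ih =>
      rw [sum_range_succ, ← ih]
      have hexp : ∀ ω, (Z (n + 1) ω) ^ 2
          = (Z n ω) ^ 2 + (2 * (Z n ω * D n ω) + (D n ω) ^ 2) := by
        intro ω; rw [hZsucc n]; simp; ring
      rw [integral_congr_ae (Filter.Eventually.of_forall hexp)]
      have i1 : Integrable (fun ω => Z n ω ^ 2) μ := (hZm n).integrable_sq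
      have i2 : Integrable (fun ω => 2 * (Z n ω * D n ω)) μ :=
        (hmul _ _ (hZm n) (hDm n)).const_mul 2
      have i3 : Integrable (fun ω => D n ω ^ 2) μ := (hDm n).integrable_sq
      have i23 : Integrable (fun ω => 2 * (Z n ω * D n ω) + D n ω ^ 2) μ := i2.add i3
      rw [integral_add i1 i23, integral_add i2 i3, integral_const_mul, hcross n]
      have hD2 : ∀ ω, (D n ω) ^ 2 = (((n : ℝ) + 1) ^ 2)⁻¹ * (X n ω) ^ 2 := by
        intro ω
        have hne : ((n : ℝ) + 1) ≠ 0 := by positivity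
        simp only [hD]
        field_simp
      rw [integral_congr_ae (Filter.Eventually.of_forall hD2), integral_const_mul]
      ring
  -- L¹ bound
  set C : ℝ := ∑' n : ℕ, (∫ ω, (X n ω) ^ 2 ∂μ) / ((n : ℝ) + 1) ^ 2 with hC
  have hterm_nonneg : ∀ k : ℕ, 0 ≤ (∫ ω, (X k ω) ^ 2 ∂μ) / ((k : ℝ) + 1) ^ 2 := by
    intro k
    apply div_nonneg (integral_nonneg fun ω => sq_nonneg _) (by positivity)
  have hC0 : 0 ≤ C := tsum_nonneg hterm_nonneg
  have hvarle : ∀ n, ∫ ω, (Z n ω) ^ 2 ∂μ ≤ C := by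
    intro n
    rw [hvar n]
    exact hsum.sum_le_tsum (range n) (fun k _ => hterm_nonneg k)
  have hbdd : ∀ n, eLpNorm (Z n) 1 μ ≤ ENNReal.ofReal (Real.sqrt C) := by
    intro n
    refine le_trans (eLpNorm_le_eLpNorm_of_exponent_le one_le_two (hZm n).1) ?_
    rw [(hZm n).eLpNorm_eq_integral_rpow_norm (by norm_num) (by norm_num)]
    apply ENNReal.ofReal_le_ofReal
    have h2r : ((2 : ℝ≥0∞)).toReal = (2 : ℝ) := by simp
    have heq : ∫ ω, ‖Z n ω‖ ^ (2 : ℝ≥0∞).toReal ∂μ = ∫ ω, (Z n ω) ^ 2 ∂μ := by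
      apply integral_congr_ae
      filter_upwards with ω
      rw [h2r, show ((2 : ℝ)) = ((2 : ℕ) : ℝ) by norm_num, Real.rpow_natCast,
        Real.norm_eq_abs, sq_abs]
    rw [heq, h2r, Real.sqrt_eq_rpow, one_div]
    exact Real.rpow_le_rpow (integral_nonneg fun ω => sq_nonneg _) (hvarle n) (by norm_num)
  -- a.e. convergence of Z
  have haeconv : ∀ᵐ ω ∂μ, ∃ c, Tendsto (fun n => Z n ω) atTop (nhds c) :=
    hZmart.submartingale.exists_ae_tendsto_of_bdd
      (R := (Real.sqrt C).toNNReal) (by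
        intro n
        simpa [ENNReal.ofReal] using hbdd n)
  filter_upwards [haeconv] with ω hω
  obtain ⟨c, hc⟩ := hω
  have hk : Tendsto (fun n : ℕ => (∑ k ∈ range n, X k ω) / n) atTop (nhds 0) := by
    apply kronecker_aux (c := c)
    refine hc.congr fun n => ?_
    simp [hZ, hD]
    congr 1
    funext k
    rw [div_eq_inv_mul]
  refine hk.congr fun n => ?_
  congr 1
  have := Finset.sum_range_sub (fun k => Y k ω) n
  simpa [hX, hY0 ω] using this
end

section
/- Consider two users with parameters p_1, p_2 ∈ (0,1), q_1, q_2 > 0 satisfying q_1/p_1 + q_2/p_2 = 1, frame length 1, served by the policy that serves the user with larger weighted debt d_j/p_j. If d_2/p_2 − d_1/p_1 > 1 + 1/min(p_1,p_2), then the conditional expected drift of Z(d) = |d_2/p_2 − d_1/p_1| over one frame equals −2 q_1/p_1; symmetrically, if d_1/p_1 − d_2/p_2 > 1 + 1/min(p_1,p_2), the drift equals −2 q_2/p_2. -/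
theorem stmt_9
    (p₁ p₂ q₁ q₂ d₁ d₂ : ℝ)
    (hp₁ : 0 < p₁) (hp₁' : p₁ < 1) (hp₂ : 0 < p₂) (hp₂' : p₂ < 1)
    (hq₁ : 0 < q₁) (hq₂ : 0 < q₂)
    (hfeas : q₁ / p₁ + q₂ / p₂ = 1) :
    ((d₂ / p₂ - d₁ / p₁ > 1 + 1 / min p₁ p₂ →
      p₂ * |(d₂ + q₂ - 1) / p₂ - (d₁ + q₁) / p₁| +
        (1 - p₂) * |(d₂ + q₂) / p₂ - (d₁ + q₁) / p₁| -
        |d₂ / p₂ - d₁ / p₁| = -(2 * (q₁ / p₁)))) ∧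
    ((d₁ / p₁ - d₂ / p₂ > 1 + 1 / min p₁ p₂ →
      p₁ * |(d₂ + q₂) / p₂ - (d₁ + q₁ - 1) / p₁| +
        (1 - p₁) * |(d₂ + q₂) / p₂ - (d₁ + q₁) / p₁| -
        |d₂ / p₂ - d₁ / p₁| = -(2 * (q₂ / p₂)))) := by
  have hqp₁ : 0 < q₁ / p₁ := div_pos hq₁ hp₁
  have hqp₂ : 0 < q₂ / p₂ := div_pos hq₂ hp₂
  have h1 : 1 / p₁ ≤ 1 / min p₁ p₂ :=
    one_div_le_one_div_of_le (lt_min hp₁ hp₂) (min_le_left _ _)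
  have h2 : 1 / p₂ ≤ 1 / min p₁ p₂ :=
    one_div_le_one_div_of_le (lt_min hp₁ hp₂) (min_le_right _ _)
  have hmin0 : 0 < 1 / min p₁ p₂ := by positivity
  have hp1c : p₁ * (1 / p₁) = 1 := by field_simp
  have hp2c : p₂ * (1 / p₂) = 1 := by field_simp
  have e₁ : (d₂ + q₂ - 1) / p₂ - (d₁ + q₁) / p₁
      = (d₂ / p₂ - d₁ / p₁) + q₂ / p₂ - q₁ / p₁ - 1 / p₂ := by ring
  have e₂ : (d₂ + q₂) / p₂ - (d₁ + q₁) / p₁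
      = (d₂ / p₂ - d₁ / p₁) + q₂ / p₂ - q₁ / p₁ := by ring
  have e₃ : (d₂ + q₂) / p₂ - (d₁ + q₁ - 1) / p₁
      = (d₂ / p₂ - d₁ / p₁) + q₂ / p₂ - q₁ / p₁ + 1 / p₁ := by ring
  constructor
  · intro h
    rw [e₁, e₂, abs_of_pos (by linarith), abs_of_pos (by linarith),
      abs_of_pos (by linarith)]
    linear_combination hfeas - hp2c
  · intro h
    rw [e₂, e₃, abs_of_neg (by linarith), abs_of_neg (by linarith),
      abs_of_neg (by linarith)]
    linear_combination hfeas - hp1c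
end

section
/- Consider the two-user system with general frame length τ where q_1/p_1 + q_2/p_2 = τ(1 − I_{{1,2}}), the timely throughput vector lies in the relative interior of this face (so q_2/p_2 < τ(1 − I_{{2}}) and q_1/p_1 < τ(1 − I_{{1}})). If in a frame the order {2,1} is used, with delivery probabilities π_2, π_1 satisfying π_2/p_2 = τ(1 − I_{{2}}) and π_2/p_2 + π_1/p_1 = τ(1 − I_{{1,2}}), then the expected one-frame drift of d_2/p_2 − d_1/p_1 equals 2(q_2/p_2 − τ(1 − I_{{2}})) < 0. -/
theorem stmt_17
    (p₁ p₂ q₁ q₂ π₁ π₂ τ I₁ I₂ I₁₂ : ℝ)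
    (hp₁ : 0 < p₁) (hp₁' : p₁ ≤ 1) (hp₂ : 0 < p₂) (hp₂' : p₂ ≤ 1)
    (hq₁ : 0 < q₁) (hq₂ : 0 < q₂)
    (hface : q₁ / p₁ + q₂ / p₂ = τ * (1 - I₁₂))
    (hrelint₂ : q₂ / p₂ < τ * (1 - I₂))
    (hrelint₁ : q₁ / p₁ < τ * (1 - I₁))
    (hπ₂ : π₂ / p₂ = τ * (1 - I₂))
    (hπ : π₂ / p₂ + π₁ / p₁ = τ * (1 - I₁₂)) :
    (q₂ - π₂) / p₂ - (q₁ - π₁) / p₁ = 2 * (q₂ / p₂ - τ * (1 - I₂)) ∧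
    2 * (q₂ / p₂ - τ * (1 - I₂)) < 0 := by
  have h1 : (q₂ - π₂) / p₂ = q₂ / p₂ - π₂ / p₂ := by ring
  have h2 : (q₁ - π₁) / p₁ = q₁ / p₁ - π₁ / p₁ := by ring
  constructor
  · rw [h1, h2]; linarith
  · linarith
end
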